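/- arXiv:2208.02573 — 6 statements merged into one kernel-verified Lean document; each statement's English description precedes it below -/
import Mathlib

section
/- Let c be a symmetric positive-definite I×I real matrix, η a K×K real matrix, and f an I×K real matrix such that f* c f is nonsingular. Then for every I×K real matrix x such that f* c x is nonsingular, tr(η* (x* c f)^{-1} (x* c x) (f* c x)^{-1} η) ≥ tr(η* (f* c f)^{-1} η). In other words, the function x ↦ ‖(x* c x)^{1/2} (f* c x)^{-1} η‖_F² is minimised at x = f. -/
open Matrix

/-! Put `u = x (fᵀcx)⁻¹ η` and `v = f (fᵀcf)⁻¹ η`, so that the two traces are `tr(uᵀcu)` and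
`tr(vᵀcv)`. Both satisfy `fᵀcu = fᵀcv = η`, hence `u - v` is `c`-orthogonal to the columns of `f`,
in particular to `v`. By Pythagoras `uᵀcu = vᵀcv + (u - v)ᵀc(u - v)`, and the last term has
nonnegative trace. -/

namespace Matrix

variable {I K : Type*} [Fintype I]

lemma PosSemidef.transpose_mul_mul_same [Fintype K] {c : Matrix I I ℝ} (hc : c.PosSemidef)
    (m : Matrix I K ℝ) : (mᵀ * c * m).PosSemidef := by
  simpa only [conjTranspose_eq_transpose_of_trivial] using hc.conjTranspose_mul_mul_same m

lemma transpose_mul_mul_add_of_transpose_mul_mul_eq_zero {c : Matrix I I ℝ} (hc : cᵀ = c)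
    {v w : Matrix I K ℝ} (h : vᵀ * c * w = 0) :
    (v + w)ᵀ * c * (v + w) = vᵀ * c * v + wᵀ * c * w := by
  have h' : wᵀ * c * v = 0 := by
    simpa only [transpose_mul, transpose_transpose, hc, Matrix.mul_assoc, transpose_zero]
      using congrArg transpose h
  simp only [transpose_add, Matrix.add_mul, Matrix.mul_add, h, h', add_zero, zero_add]

lemma PosSemidef.trace_transpose_mul_mul_le_of_eq_zero [Fintype K] {c : Matrix I I ℝ} (hc : c.PosSemidef)
    {v w : Matrix I K ℝ} (h : vᵀ * c * w = 0) :
    (vᵀ * c * v).trace ≤ ((v + w)ᵀ * c * (v + w)).trace := by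
  have hct : cᵀ = c := by simpa using hc.isHermitian.eq
  rw [transpose_mul_mul_add_of_transpose_mul_mul_eq_zero hct h, trace_add]
  exact le_add_of_nonneg_right (hc.transpose_mul_mul_same w).trace_nonneg

lemma mul_mul_nonsing_inv_mul_cancel [Fintype K] [DecidableEq K] {a : Matrix K I ℝ} {b : Matrix I K ℝ}
    (h : IsUnit (a * b).det) (η : Matrix K K ℝ) : a * (b * (a * b)⁻¹ * η) = η := by
  rw [← Matrix.mul_assoc, ← Matrix.mul_assoc, mul_nonsing_inv _ h, Matrix.one_mul]

end Matrix

theorem stmt0_general {I K : Type*} [Fintype I] [Fintype K] [DecidableEq K]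
    (c : Matrix I I ℝ) (hc : c.PosDef)
    (η : Matrix K K ℝ) (f : Matrix I K ℝ)
    (hf : IsUnit (fᵀ * c * f).det)
    (x : Matrix I K ℝ) (hx : IsUnit (fᵀ * c * x).det) :
    (ηᵀ * (fᵀ * c * f)⁻¹ * η).trace ≤
      (ηᵀ * (xᵀ * c * f)⁻¹ * (xᵀ * c * x) * (fᵀ * c * x)⁻¹ * η).trace := by
  have hct : cᵀ = c := by simpa using hc.isHermitian.eq
  set u := x * (fᵀ * c * x)⁻¹ * η
  set v := f * (fᵀ * c * f)⁻¹ * η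
  have hu : fᵀ * c * u = η := mul_mul_nonsing_inv_mul_cancel hx η
  have hv : fᵀ * c * v = η := mul_mul_nonsing_inv_mul_cancel hf η
  have hvf : vᵀ * c * f = ηᵀ := by
    rw [← hv]; simp only [transpose_mul, transpose_transpose, hct, Matrix.mul_assoc]
  have horth : vᵀ * c * (u - v) = 0 := by
    have hw : fᵀ * c * (u - v) = 0 := by rw [Matrix.mul_sub, hu, hv, sub_self]
    calc vᵀ * c * (u - v) = ((fᵀ * c * f)⁻¹ * η)ᵀ * (fᵀ * c * (u - v)) := by
          simp only [v, transpose_mul, Matrix.mul_assoc]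
      _ = 0 := by rw [hw, Matrix.mul_zero]
  have hvv : vᵀ * c * v = ηᵀ * (fᵀ * c * f)⁻¹ * η := by
    simp only [v, ← Matrix.mul_assoc, hvf]
  have huu : uᵀ * c * u = ηᵀ * (xᵀ * c * f)⁻¹ * (xᵀ * c * x) * (fᵀ * c * x)⁻¹ * η := by
    simp only [u, transpose_mul, transpose_nonsing_inv, transpose_transpose, hct, Matrix.mul_assoc]
  have key := hc.posSemidef.trace_transpose_mul_mul_le_of_eq_zero horth
  rwa [add_sub_cancel, hvv, huu] at key

/-- Lemma 1 (Frobenius minimisation): for symmetric positive-definite `c`,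
any `η`, and `f` with `fᵀ c f` nonsingular, among all `x` with `fᵀ c x`
nonsingular, the quantity `tr(ηᵀ (xᵀcf)⁻¹ (xᵀcx) (fᵀcx)⁻¹ η)` is minimised
at `x = f`, where it equals `tr(ηᵀ (fᵀcf)⁻¹ η)`. -/
theorem stmt0 {I K : Type*} [Fintype I] [Fintype K] [DecidableEq I] [DecidableEq K]
    (c : Matrix I I ℝ) (hc : c.PosDef)
    (η : Matrix K K ℝ) (f : Matrix I K ℝ)
    (hf : IsUnit (fᵀ * c * f).det)
    (x : Matrix I K ℝ) (hx : IsUnit (fᵀ * c * x).det) :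
    (ηᵀ * (fᵀ * c * f)⁻¹ * η).trace ≤
      (ηᵀ * (xᵀ * c * f)⁻¹ * (xᵀ * c * x) * (fᵀ * c * x)⁻¹ * η).trace :=
  stmt0_general c hc η f hf x hx
end

section
/- Let c ∈ ℝ^{I×I} be symmetric nonnegative definite and let p ∈ ℝ^{I×I} be an orthogonal projection matrix (p² = p = p*). Let c_{pp} := p c p, and let c_{pp}^† denote the Moore–Penrose pseudoinverse of c_{pp} (equivalently, the inverse of c_{pp} viewed as a linear map on the range of p). Then c c_{pp}^† c ≤ c in the Loewner order of nonnegative definite matrices; i.e., c − c c_{pp}^† c is nonnegative definite. -/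
/-!
Write `c = s²` with `s` the nonnegative square root of `c`. Since `d` is symmetric with
`d p = p d = d`, the Penrose identity `d (p c p) d = d` becomes `d c d = d`, so `e := s d s` is
symmetric and idempotent, i.e. an orthogonal projection, and `e ≤ 1`. Conjugating by `s` gives
`c d c = s e s ≤ s s = c`.
-/

open Matrix

/-- `d` is the Moore–Penrose pseudoinverse of `m` (the four Penrose conditions). -/
def IsMoorePenrose {I : Type*} [Fintype I] [DecidableEq I]
    (m d : Matrix I I ℝ) : Prop :=
  m * d * m = m ∧ d * m * d = d ∧ (m * d)ᵀ = m * d ∧ (d * m)ᵀ = d * m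

theorem mul_mul_le_of_mul_mul_eq_self {R : Type*} [Ring R] [PartialOrder R] [StarRing R]
    [StarOrderedRing R] {c s d : R} (hs : IsSelfAdjoint s) (hsc : s * s = c)
    (hd : IsSelfAdjoint d) (hdcd : d * c * d = d) : c * d * c ≤ c := by
  have hidem : IsIdempotentElem (s * d * s) :=
    calc s * d * s * (s * d * s) = s * (d * (s * s) * d) * s := by simp only [mul_assoc]
      _ = s * d * s := by rw [hsc, hdcd, mul_assoc]
  have he : IsStarProjection (s * d * s) :=
    ⟨hidem, by simpa only [hs.star_eq] using hd.conjugate s⟩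
  calc c * d * c = s * (s * d * s) * s := by simp only [← hsc, mul_assoc]
    _ ≤ s * 1 * s := hs.conjugate_le_conjugate he.le_one
    _ = c := by rw [mul_one, hsc]

open scoped ComplexOrder MatrixOrder in
theorem Matrix.PosSemidef.sub_mul_mul_of_mul_mul_eq_self {n 𝕜 : Type*} [Fintype n]
    [DecidableEq n] [RCLike 𝕜] {c d : Matrix n n 𝕜} (hc : c.PosSemidef) (hd : d.IsHermitian)
    (hdcd : d * c * d = d) : (c - c * d * c).PosSemidef :=
  Matrix.le_iff.mp <| mul_mul_le_of_mul_mul_eq_self (CFC.sqrt_nonneg c).isSelfAdjoint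
    (CFC.sqrt_mul_sqrt_self c hc.nonneg) hd hdcd

namespace IsMoorePenrose

variable {I : Type*} [Fintype I] [DecidableEq I] {m d d' q : Matrix I I ℝ}

theorem transpose (h : IsMoorePenrose m d) : IsMoorePenrose mᵀ dᵀ := by
  obtain ⟨hmdm, hdmd, hmd, hdm⟩ := h
  refine ⟨?_, ?_, ?_, ?_⟩
  · simpa only [transpose_mul, Matrix.mul_assoc] using congrArg Matrix.transpose hmdm
  · simpa only [transpose_mul, Matrix.mul_assoc] using congrArg Matrix.transpose hdmd
  · rw [← transpose_mul, hdm, hdm]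
  · rw [← transpose_mul, hmd, hmd]

theorem unique (h : IsMoorePenrose m d) (h' : IsMoorePenrose m d') : d = d' := by
  obtain ⟨hmdm, hdmd, hmd, hdm⟩ := h
  obtain ⟨hmdm', hdmd', hmd', hdm'⟩ := h'
  have hmd_eq : m * d = m * d' :=
    calc m * d = ((m * d') * (m * d))ᵀ := by rw [← Matrix.mul_assoc, hmdm', hmd]
      _ = (m * d) * (m * d') := by rw [transpose_mul, hmd, hmd']
      _ = m * d' := by rw [← Matrix.mul_assoc, hmdm]
  have hdm_eq : d * m = d' * m :=
    calc d * m = ((d * m) * (d' * m))ᵀ := by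
          rw [Matrix.mul_assoc, ← Matrix.mul_assoc m, hmdm', hdm]
      _ = (d' * m) * (d * m) := by rw [transpose_mul, hdm, hdm']
      _ = d' * m := by rw [Matrix.mul_assoc, ← Matrix.mul_assoc m, hmdm]
  calc d = d * m * d := hdmd.symm
    _ = d' * (m * d') := by rw [hdm_eq, Matrix.mul_assoc, hmd_eq]
    _ = d' := by rw [← Matrix.mul_assoc, hdmd']

theorem isSymm (h : IsMoorePenrose m d) (hm : m.IsSymm) : d.IsSymm :=
  (hm.eq ▸ h.transpose).unique h

theorem mul_eq_of_transpose_mul (h : IsMoorePenrose m d) (hq : qᵀ * m = m) : d * q = d := by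
  have hd : d = d * dᵀ * mᵀ :=
    calc d = d * (m * d) := by rw [← Matrix.mul_assoc, h.2.1]
      _ = d * dᵀ * mᵀ := by rw [← h.2.2.1, transpose_mul, Matrix.mul_assoc]
  calc d * q = d * dᵀ * (qᵀ * m)ᵀ := by
        rw [transpose_mul, transpose_transpose, ← Matrix.mul_assoc, ← hd]
    _ = d := by rw [hq, ← hd]

theorem mul_eq_of_mul_transpose (h : IsMoorePenrose m d) (hq : m * qᵀ = m) : q * d = d := by
  have hd : d = mᵀ * dᵀ * d :=
    calc d = d * m * d := h.2.1.symm
      _ = mᵀ * dᵀ * d := by rw [← h.2.2.2, transpose_mul]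
  calc q * d = (m * qᵀ)ᵀ * dᵀ * d := by
        rw [transpose_mul, transpose_transpose, Matrix.mul_assoc, Matrix.mul_assoc,
          ← Matrix.mul_assoc mᵀ, ← hd]
    _ = d := by rw [hq, ← hd]

theorem mul_mul_eq_self_of_compression {c p : Matrix I I ℝ} (hp : p * p = p) (hps : pᵀ = p)
    (h : IsMoorePenrose (p * c * p) d) : d * c * d = d := by
  have hdp : d * p = d :=
    h.mul_eq_of_transpose_mul (by rw [hps, ← Matrix.mul_assoc, ← Matrix.mul_assoc, hp])
  have hpd : p * d = d := h.mul_eq_of_mul_transpose (by rw [hps, Matrix.mul_assoc, hp])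
  calc d * c * d = d * p * c * (p * d) := by rw [hdp, hpd]
    _ = d * (p * c * p) * d := by simp only [Matrix.mul_assoc]
    _ = d := h.2.1

end IsMoorePenrose

/-- Lemma 2: for `c` symmetric nonnegative definite and `p` an orthogonal projection,
with `c_{pp} := p c p` and `c_{pp}†` its Moore–Penrose pseudoinverse, one has
`c c_{pp}† c ≤ c` in the Loewner order, i.e. `c - c c_{pp}† c` is nonnegative definite. -/
theorem stmt2 {I : Type*} [Fintype I] [DecidableEq I]
    (c p d : Matrix I I ℝ) (hc : c.PosSemidef)
    (hp_proj : p * p = p) (hp_symm : pᵀ = p)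
    (hd : IsMoorePenrose (p * c * p) d) :
    (c - c * d * c).PosSemidef := by
  have hpcp : (p * c * p).IsSymm := by
    rw [IsSymm, transpose_mul, transpose_mul, hp_symm, isHermitian_iff_isSymm.mp hc.isHermitian,
      Matrix.mul_assoc]
  exact hc.sub_mul_mul_of_mul_mul_eq_self (isHermitian_iff_isSymm.mpr (hd.isSymm hpcp))
    (hd.mul_mul_eq_self_of_compression hp_proj hp_symm)
end

section
/- Let z ∈ ℝ^I and let h ∈ ℝ^{I×I} be symmetric nonnegative definite with h z ≠ 0. Then the function y ↦ (1/4)‖y − z‖⁴ + ‖h^{1/2} y‖² on ℝ^I is strictly convex and has a unique minimiser, given by y = (id + b^{-1} h)^{-1} z, where b ∈ (0, ‖z‖²/2) is the unique positive solution of the one-dimensional equation (1/2)‖(h + b·id)^{-1} h z‖² = b. -/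
/-!
The quartic term is the square of the strictly convex, nonnegative function `y ↦ ‖y − z‖²`,
hence strictly convex, and the quadratic form of `h` is convex; the objective is also coercive,
so it has a unique minimiser `y₀`. Its first-order condition reads `h y₀ = b (z − y₀)` with
`b = ‖z − y₀‖² / 2`, which says both `y₀ = (id + b⁻¹ h)⁻¹ z` and `z − y₀ = (h + b id)⁻¹ h z`,
i.e. the fixed-point equation for `b`. Since `h z ≠ 0`, `y₀ ≠ z` and `y₀ ≠ 0`, and
`0 ≤ y₀ ⬝ h y₀ = b y₀ ⬝ (z − y₀)` then gives `‖z − y₀‖² < ‖z‖²`. Finally any admissible `b'`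
makes `(id + b'⁻¹ h)⁻¹ z` a minimiser, hence equal to `y₀`, and its fixed-point equation
forces `b' = ‖z − y₀‖² / 2 = b`.
-/

open Matrix

/-- The shrinkage objective `y ↦ (1/4)‖y − z‖⁴ + ‖h^{1/2} y‖²`, written via dot
products: `‖y − z‖² = (y−z)⬝ᵥ(y−z)` and `‖h^{1/2} y‖² = y ⬝ᵥ h y` for `h`
symmetric nonnegative definite. -/
noncomputable def shrinkObj {I : Type*} [Fintype I]
    (h : Matrix I I ℝ) (z y : I → ℝ) : ℝ :=
  (1 / 4) * ((y - z) ⬝ᵥ (y - z)) ^ 2 + y ⬝ᵥ h.mulVec y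

open Set Filter

section Convexity

variable {E : Type*} [AddCommMonoid E] [Module ℝ E] {s : Set E} {f : E → ℝ}

theorem StrictConvexOn.const_mul (hf : StrictConvexOn ℝ s f) {c : ℝ} (hc : 0 < c) :
    StrictConvexOn ℝ s (fun x ↦ c * f x) :=
  ⟨hf.1, fun x hx y hy hxy a b ha hb hab ↦ by
    simpa only [smul_eq_mul, mul_add, mul_left_comm c] using
      mul_lt_mul_of_pos_left (hf.2 hx hy hxy ha hb hab) hc⟩

theorem StrictConvexOn.sq (hf : StrictConvexOn ℝ s f) (hf₀ : ∀ x ∈ s, 0 ≤ f x) :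
    StrictConvexOn ℝ s (fun x ↦ f x ^ 2) := by
  refine ⟨hf.1, fun x hx y hy hxy a b ha hb hab ↦ ?_⟩
  calc f (a • x + b • y) ^ 2 < (a • f x + b • f y) ^ 2 :=
        pow_lt_pow_left₀ (hf.2 hx hy hxy ha hb hab) (hf₀ _ (hf.1 hx hy ha.le hb.le hab))
          two_ne_zero
    _ ≤ a • f x ^ 2 + b • f y ^ 2 :=
        (convexOn_pow 2).2 (hf₀ x hx) (hf₀ y hy) ha.le hb.le hab

theorem StrictConvexOn.lt_of_isMinOn (hf : StrictConvexOn ℝ s f) {x y : E}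
    (hx : IsMinOn f s x) (hxs : x ∈ s) (hys : y ∈ s) (hyx : y ≠ x) : f x < f y :=
  (hx hys).lt_of_ne fun hfy ↦ hyx <|
    hf.eq_of_isMinOn (fun _ hw ↦ hfy ▸ hx hw) hx hys hxs

end Convexity

theorem eq_zero_of_forall_mul_nonneg {φ : ℝ → ℝ} (hφ : ContinuousAt φ 0)
    (h : ∀ t, 0 ≤ t * φ t) : φ 0 = 0 :=
  le_antisymm
    (le_of_tendsto (hφ.tendsto.mono_left nhdsWithin_le_nhds)
      (eventually_nhdsWithin_of_forall (s := Iio 0) fun t ht ↦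
        nonpos_of_mul_nonneg_right (h t) ht))
    (ge_of_tendsto (hφ.tendsto.mono_left nhdsWithin_le_nhds)
      (eventually_nhdsWithin_of_forall (s := Ioi 0) fun t ht ↦
        nonneg_of_mul_nonneg_right (h t) ht))

theorem dotProduct_self_nonneg {I R : Type*} [Fintype I] [Ring R] [LinearOrder R]
    [IsStrictOrderedRing R] (v : I → R) : 0 ≤ v ⬝ᵥ v :=
  Fintype.sum_nonneg fun _ ↦ mul_self_nonneg _

theorem sq_norm_le_dotProduct_self {I : Type*} [Fintype I] (u : I → ℝ) : ‖u‖ ^ 2 ≤ u ⬝ᵥ u := by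
  rw [← Real.le_sqrt (norm_nonneg _) (dotProduct_self_nonneg u)]
  refine (pi_norm_le_iff_of_nonneg (Real.sqrt_nonneg _)).2 fun i ↦ ?_
  rw [Real.norm_eq_abs]
  refine Real.abs_le_sqrt ?_
  rw [sq]
  exact Finset.single_le_sum (fun j _ ↦ mul_self_nonneg (u j)) (Finset.mem_univ i)

namespace Matrix

theorem PosSemidef.posDef_one_add_smul {I : Type*} [DecidableEq I] {h : Matrix I I ℝ}
    (hh : h.PosSemidef) {b : ℝ} (hb : 0 < b) : (1 + b⁻¹ • h).PosDef :=
  PosDef.one.add_posSemidef (hh.smul (inv_nonneg.2 hb.le))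

theorem PosSemidef.posDef_add_smul_one {I : Type*} [DecidableEq I] {h : Matrix I I ℝ}
    (hh : h.PosSemidef) {b : ℝ} (hb : 0 < b) : (h + b • 1).PosDef :=
  PosDef.posSemidef_add hh (PosDef.one.smul hb)

variable {I : Type*} [Fintype I]

theorem inv_mulVec_eq_iff_eq_mulVec [DecidableEq I] {R : Type*} [CommRing R]
    {A : Matrix I I R} [Invertible A] {u v : I → R} : A⁻¹ *ᵥ u = v ↔ u = A *ᵥ v :=
  ⟨fun h ↦ by rw [← h, mulVec_mulVec, mul_inv_of_invertible, one_mulVec], inv_mulVec_eq_vec⟩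

theorem IsSymm.dotProduct_mulVec_comm {R : Type*} [CommSemiring R] {M : Matrix I I R}
    (hM : M.IsSymm) (u v : I → R) : u ⬝ᵥ M *ᵥ v = v ⬝ᵥ M *ᵥ u := by
  rw [dotProduct_mulVec, ← mulVec_transpose, hM.eq, dotProduct_comm]

theorem IsSymm.dotProduct_mulVec_smul_add_smul {R : Type*} [CommRing R] {M : Matrix I I R}
    (hM : M.IsSymm) (u v : I → R) {a b : R} (hab : a + b = 1) :
    (a • u + b • v) ⬝ᵥ M *ᵥ (a • u + b • v) =
      a * (u ⬝ᵥ M *ᵥ u) + b * (v ⬝ᵥ M *ᵥ v) - a * b * ((u - v) ⬝ᵥ M *ᵥ (u - v)) := by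
  simp only [mulVec_add, mulVec_sub, mulVec_smul, add_dotProduct, sub_dotProduct, dotProduct_add,
    dotProduct_sub, smul_dotProduct, dotProduct_smul, smul_eq_mul, hM.dotProduct_mulVec_comm v u]
  linear_combination (a * (u ⬝ᵥ M *ᵥ u) + b * (v ⬝ᵥ M *ᵥ v)) * hab

theorem PosSemidef.convexOn_dotProduct_mulVec {M : Matrix I I ℝ} (hM : M.PosSemidef) :
    ConvexOn ℝ univ (fun y ↦ y ⬝ᵥ M *ᵥ y) := by
  refine ⟨convex_univ, fun x _ y _ a b ha hb hab ↦ ?_⟩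
  have hQ := hM.dotProduct_mulVec_nonneg (x - y)
  rw [star_trivial] at hQ
  simp only [smul_eq_mul]
  rw [(isHermitian_iff_isSymm.mp hM.isHermitian).dotProduct_mulVec_smul_add_smul x y hab]
  nlinarith [mul_nonneg (mul_nonneg ha hb) hQ]

theorem PosDef.strictConvexOn_dotProduct_mulVec {M : Matrix I I ℝ} (hM : M.PosDef) :
    StrictConvexOn ℝ univ (fun y ↦ y ⬝ᵥ M *ᵥ y) := by
  refine ⟨convex_univ, fun x _ y _ hxy a b ha hb hab ↦ ?_⟩
  have hQ := hM.dotProduct_mulVec_pos (sub_ne_zero.mpr hxy)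
  rw [star_trivial] at hQ
  simp only [smul_eq_mul]
  rw [(isHermitian_iff_isSymm.mp hM.isHermitian).dotProduct_mulVec_smul_add_smul x y hab]
  nlinarith [mul_pos (mul_pos ha hb) hQ]

end Matrix

section Resolvent

variable {I : Type*} [Fintype I] {h : Matrix I I ℝ} {b : ℝ} {y z : I → ℝ}

theorem inv_one_add_smul_mulVec_eq_iff [DecidableEq I] (hh : h.PosSemidef) (hb : 0 < b) :
    (1 + b⁻¹ • h)⁻¹ *ᵥ z = y ↔ h *ᵥ y = b • (z - y) := by
  have := (hh.posDef_one_add_smul hb).isUnit.invertible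
  rw [← inv_smul_eq_iff₀ hb.ne', eq_sub_iff_add_eq', ← smul_mulVec, inv_mulVec_eq_iff_eq_mulVec,
    add_mulVec, one_mulVec, eq_comm]

theorem add_smul_one_inv_mulVec_mulVec [DecidableEq I] (hh : h.PosSemidef) (hb : 0 < b)
    (hy : h *ᵥ y = b • (z - y)) : (h + b • 1)⁻¹ *ᵥ (h *ᵥ z) = z - y := by
  have := (hh.posDef_add_smul_one hb).isUnit.invertible
  refine inv_mulVec_eq_vec ?_
  rw [add_mulVec, smul_mulVec, one_mulVec, mulVec_sub, hy]
  abel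

theorem dotProduct_sub_lt_of_mulVec_eq (hh : h.PosSemidef) (hb : 0 < b)
    (hy : h *ᵥ y = b • (z - y)) (hz : h *ᵥ z ≠ 0) : (z - y) ⬝ᵥ (z - y) < z ⬝ᵥ z := by
  have hyw : 0 ≤ y ⬝ᵥ (z - y) := by
    have := hh.dotProduct_mulVec_nonneg y
    rw [star_trivial, hy, dotProduct_smul, smul_eq_mul] at this
    exact nonneg_of_mul_nonneg_right this hb
  have hy₀ : y ≠ 0 := by
    rintro rfl
    rw [mulVec_zero, sub_zero, eq_comm, smul_eq_zero_iff_right hb.ne'] at hy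
    exact hz (hy ▸ mulVec_zero h)
  have hyy : 0 < y ⬝ᵥ y :=
    (dotProduct_self_nonneg y).lt_of_ne (Ne.symm (dotProduct_self_eq_zero.not.2 hy₀))
  have hz_eq : z ⬝ᵥ z = y ⬝ᵥ y + 2 * (y ⬝ᵥ (z - y)) + (z - y) ⬝ᵥ (z - y) := by
    conv_lhs => rw [show z = y + (z - y) by abel]
    simp only [add_dotProduct, dotProduct_add, dotProduct_comm (z - y) y]
    ring
  linarith

end Resolvent

section ShrinkObj

variable {I : Type*} [Fintype I] {h : Matrix I I ℝ}

theorem strictConvexOn_dotProduct_sub_self (z : I → ℝ) :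
    StrictConvexOn ℝ univ (fun y : I → ℝ ↦ (y - z) ⬝ᵥ (y - z)) := by
  classical
  have := (PosDef.one (n := I) (R := ℝ)).strictConvexOn_dotProduct_mulVec.translate_right (-z)
  simpa [Function.comp_def, neg_add_eq_sub] using this

theorem strictConvexOn_shrinkObj (hh : h.PosSemidef) (z : I → ℝ) :
    StrictConvexOn ℝ univ (shrinkObj h z) :=
  (((strictConvexOn_dotProduct_sub_self z).sq fun y _ ↦ dotProduct_self_nonneg _).const_mul
    (by norm_num : (0 : ℝ) < 1 / 4)).add_convexOn hh.convexOn_dotProduct_mulVec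

theorem continuous_shrinkObj (h : Matrix I I ℝ) (z : I → ℝ) : Continuous (shrinkObj h z) := by
  unfold shrinkObj
  fun_prop

theorem tendsto_shrinkObj_cocompact (hh : h.PosSemidef) (z : I → ℝ) :
    Tendsto (shrinkObj h z) (cocompact _) atTop := by
  have hnorm : Tendsto (fun y : I → ℝ ↦ ‖y - z‖) (cocompact _) atTop :=
    tendsto_norm_cocompact_atTop.comp (Homeomorph.subRight z).isClosedEmbedding.tendsto_cocompact
  refine tendsto_atTop_mono (fun y ↦ ?_) (((tendsto_pow_atTop four_ne_zero).const_mul_atTop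
    (by norm_num : (0 : ℝ) < 1 / 4)).comp hnorm)
  have hsq := sq_norm_le_dotProduct_self (y - z)
  have hQ : 0 ≤ y ⬝ᵥ h *ᵥ y := by simpa using hh.dotProduct_mulVec_nonneg y
  simp only [Function.comp_apply, shrinkObj]
  nlinarith [pow_le_pow_left₀ (sq_nonneg ‖y - z‖) hsq 2]

theorem shrinkObj_add_smul_sub (hh : h.IsSymm) (z y v : I → ℝ) (t : ℝ) :
    shrinkObj h z (y + t • v) - shrinkObj h z y =
      t * ((t * (v ⬝ᵥ v) - 2 * ((z - y) ⬝ᵥ v)) *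
          (2 * ((z - y) ⬝ᵥ (z - y)) + t * (t * (v ⬝ᵥ v) - 2 * ((z - y) ⬝ᵥ v))) / 4 +
        2 * (v ⬝ᵥ h *ᵥ y) + t * (v ⬝ᵥ h *ᵥ v)) := by
  have hyz : y + t • v - z = t • v - (z - y) := by abel
  simp only [shrinkObj, hyz, show y - z = -(z - y) by abel]
  set w := z - y
  simp only [neg_dotProduct, dotProduct_neg, mulVec_add, mulVec_smul, add_dotProduct,
    dotProduct_add, sub_dotProduct, dotProduct_sub, smul_dotProduct, dotProduct_smul, smul_eq_mul,
    dotProduct_comm v w, hh.dotProduct_mulVec_comm y v]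
  ring

theorem mulVec_eq_smul_sub_of_isMinOn_shrinkObj (hh : h.IsSymm) {z y : I → ℝ}
    (hy : IsMinOn (shrinkObj h z) univ y) :
    h *ᵥ y = ((z - y) ⬝ᵥ (z - y) / 2) • (z - y) := by
  have hdir : ∀ v, (h *ᵥ y - ((z - y) ⬝ᵥ (z - y) / 2) • (z - y)) ⬝ᵥ v = 0 := fun v ↦ by
    have := eq_zero_of_forall_mul_nonneg (by fun_prop) fun t ↦
      shrinkObj_add_smul_sub hh z y v t ▸ sub_nonneg.2 (hy (mem_univ (y + t • v)))
    rw [sub_dotProduct, smul_dotProduct, smul_eq_mul, dotProduct_comm, dotProduct_comm (z - y)]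
    linarith
  exact sub_eq_zero.1 (dotProduct_eq_zero _ hdir)

end ShrinkObj

/-- Lemma 3 (case `z ∉ ker h`): the objective is strictly convex; there is a unique
`b ∈ (0, ‖z‖²/2)` solving `(1/2)‖(h + b·id)⁻¹ h z‖² = b`, and for this `b` the point
`y = (id + b⁻¹ h)⁻¹ z` is the unique minimiser of the objective. -/
theorem stmt4 {I : Type*} [Fintype I] [DecidableEq I]
    (h : Matrix I I ℝ) (hh : h.PosSemidef) (z : I → ℝ) (hz : h.mulVec z ≠ 0) :
    StrictConvexOn ℝ Set.univ (shrinkObj h z) ∧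
    ∃! b : ℝ, b ∈ Set.Ioo 0 ((z ⬝ᵥ z) / 2) ∧
      (1 / 2) * ((h + b • (1 : Matrix I I ℝ))⁻¹.mulVec (h.mulVec z) ⬝ᵥ
        (h + b • (1 : Matrix I I ℝ))⁻¹.mulVec (h.mulVec z)) = b ∧
      ∀ y : I → ℝ, y ≠ ((1 : Matrix I I ℝ) + b⁻¹ • h)⁻¹.mulVec z →
        shrinkObj h z (((1 : Matrix I I ℝ) + b⁻¹ • h)⁻¹.mulVec z) < shrinkObj h z y := by
  have hconv := strictConvexOn_shrinkObj hh z
  obtain ⟨y₀, hy₀⟩ :=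
    (continuous_shrinkObj h z).exists_forall_le (tendsto_shrinkObj_cocompact hh z)
  have hmin : IsMinOn (shrinkObj h z) univ y₀ := fun y _ ↦ hy₀ y
  set b := (z - y₀) ⬝ᵥ (z - y₀) / 2 with hb_def
  have hgrad : h *ᵥ y₀ = b • (z - y₀) :=
    mulVec_eq_smul_sub_of_isMinOn_shrinkObj (isHermitian_iff_isSymm.mp hh.isHermitian) hmin
  have hb : 0 < b := by
    refine (div_nonneg (dotProduct_self_nonneg _) zero_le_two).lt_of_ne fun hb₀ ↦ hz ?_
    have hzy : z - y₀ = 0 := dotProduct_self_eq_zero.1 (by linarith)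
    rw [sub_eq_zero.1 hzy, hgrad, hzy, smul_zero]
  have hy₀_eq : (1 + b⁻¹ • h)⁻¹ *ᵥ z = y₀ := (inv_one_add_smul_mulVec_eq_iff hh hb).2 hgrad
  refine ⟨hconv, b, ⟨⟨hb, ?_⟩, ?_, ?_⟩, ?_⟩
  · linarith [dotProduct_sub_lt_of_mulVec_eq hh hb hgrad hz]
  · rw [add_smul_one_inv_mulVec_mulVec hh hb hgrad]
    ring
  · rw [hy₀_eq]
    exact fun y hy ↦ hconv.lt_of_isMinOn hmin (mem_univ _) (mem_univ _) hy
  · rintro b' ⟨⟨hb', -⟩, hfix, hmin'⟩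
    have hy' : (1 + b'⁻¹ • h)⁻¹ *ᵥ z = y₀ := by
      by_contra hne
      exact (hmin' y₀ (Ne.symm hne)).not_ge (hy₀ _)
    rw [add_smul_one_inv_mulVec_mulVec hh hb' ((inv_one_add_smul_mulVec_eq_iff hh hb').1 hy')]
      at hfix
    linarith
end

section
/- Let h ∈ ℝ^{I×I} be symmetric nonnegative definite with h z ≠ 0, and suppose y ∈ ℝ^I satisfies the first-order condition ‖y − z‖²(y − z) + 2 h y = 0 with y ≠ z. Then ‖z‖² = ‖y‖² + 4·((1/4)‖y − z‖⁴ + ‖h^{1/2} y‖²)/‖y − z‖². In particular ‖y‖ ≤ ‖z‖. -/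
open Matrix

/-
Taking the dot product of the first-order condition with `y` gives
`‖y − z‖² · y ⬝ (z − y) = 2 y ⬝ h y`.  Substituting this into
`‖z‖² = ‖y‖² + ‖z − y‖² + 2 y ⬝ (z − y)` gives the identity, and the added term is
nonnegative because `h` is positive semidefinite.
-/

theorem Matrix.mul_dotProduct_sub_eq_two_mul_dotProduct_mulVec {I R : Type*} [Fintype I]
    [CommRing R] (h : Matrix I I R) {z y : I → R}
    (hfoc : ((y - z) ⬝ᵥ (y - z)) • (y - z) + (2 : R) • h *ᵥ y = 0) :
    ((y - z) ⬝ᵥ (y - z)) * (y ⬝ᵥ (z - y)) = 2 * (y ⬝ᵥ h *ᵥ y) := by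
  have hdot := congrArg (y ⬝ᵥ ·) hfoc
  simp only [dotProduct_add, dotProduct_smul, smul_eq_mul, dotProduct_zero] at hdot
  rw [← neg_sub y z, dotProduct_neg]
  linear_combination -hdot

theorem stmt6_general {I : Type*} [Fintype I]
    (h : Matrix I I ℝ) (hh : h.PosSemidef) (z y : I → ℝ)
    (hfoc : ((y - z) ⬝ᵥ (y - z)) • (y - z) + (2 : ℝ) • h.mulVec y = 0)
    (hyz : y ≠ z) :
    z ⬝ᵥ z = y ⬝ᵥ y +
      4 * ((1 / 4) * ((y - z) ⬝ᵥ (y - z)) ^ 2 + y ⬝ᵥ h.mulVec y) / ((y - z) ⬝ᵥ (y - z)) ∧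
    y ⬝ᵥ y ≤ z ⬝ᵥ z := by
  set q := (y - z) ⬝ᵥ (y - z)
  have hq : 0 < q := by
    simpa only [star_trivial] using dotProduct_star_self_pos_iff.mpr (sub_ne_zero.mpr hyz)
  have hyHy : 0 ≤ y ⬝ᵥ h *ᵥ y := by simpa using hh.dotProduct_mulVec_nonneg y
  have hexpand : z ⬝ᵥ z = y ⬝ᵥ y + 2 * (y ⬝ᵥ (z - y)) + q := by
    simp only [q, dotProduct_sub, sub_dotProduct, dotProduct_comm z y]
    ring
  have hidentity : z ⬝ᵥ z = y ⬝ᵥ y + 4 * ((1 / 4) * q ^ 2 + y ⬝ᵥ h *ᵥ y) / q := by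
    rw [hexpand]
    field_simp
    linear_combination 2 * mul_dotProduct_sub_eq_two_mul_dotProduct_mulVec h hfoc
  refine ⟨hidentity, ?_⟩
  rw [hidentity]
  exact le_add_of_nonneg_right (div_nonneg (by positivity) hq.le)

/-- Remark on the shrinkage property: if `y ≠ z` satisfies the first-order condition
`‖y − z‖²(y − z) + 2 h y = 0` then
`‖z‖² = ‖y‖² + 4·((1/4)‖y − z‖⁴ + ‖h^{1/2} y‖²)/‖y − z‖²`; in particular `‖y‖ ≤ ‖z‖`.
Here `‖h^{1/2} y‖² = y ⬝ᵥ h y`. -/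
theorem stmt6 {I : Type*} [Fintype I] [DecidableEq I]
    (h : Matrix I I ℝ) (hh : h.PosSemidef) (z y : I → ℝ) (hz : h.mulVec z ≠ 0)
    (hfoc : ((y - z) ⬝ᵥ (y - z)) • (y - z) + (2 : ℝ) • h.mulVec y = 0)
    (hyz : y ≠ z) :
    z ⬝ᵥ z = y ⬝ᵥ y +
      4 * ((1 / 4) * ((y - z) ⬝ᵥ (y - z)) ^ 2 + y ⬝ᵥ h.mulVec y) / ((y - z) ⬝ᵥ (y - z)) ∧
    y ⬝ᵥ y ≤ z ⬝ᵥ z :=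
  stmt6_general h hh z y hfoc hyz
end

section
/- Let z ∈ ℝ^I with z ≠ 0, let s > 0, and set h := s·id. Then the unique solution b ∈ (0, ‖z‖²/2) of (1/2)‖(h + b·id)^{-1} h z‖² = b satisfies the cubic equation (b/s)³ + 2(b/s)² + (b/s) − ‖z‖²/(2s) = 0, and the minimiser of y ↦ (1/4)‖y − z‖⁴ + s‖y‖² equals y = a z where a := b/(b + s) ∈ (0,1) satisfies −(‖z‖²/s)(1 − a)³ + 2a = 0. -/
open Matrix

/-!
In the scalar case `h = s • 1` the resolvent `(h + b • 1)⁻¹ h` is multiplication by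
`s / (s + b)`, so the fixed-point equation becomes the cubic `b (s + b)² = s² ‖z‖² / 2`, whose
left side is strictly increasing on `[0, ∞)`; this gives existence and uniqueness. With
`a = b / (b + s)` the cubic is the stationarity condition `2 s a = (1 - a)³ ‖z‖²` of the objective
along `y = a z`; expanding the objective around `a z` then writes its excess as a sum of
nonnegative terms, one of which is `s ‖y - a z‖²`.
-/

section ScalarResolvent

variable {I K : Type*} [Fintype I] [DecidableEq I] [Field K]

theorem Matrix.inv_smul_one {c : K} (hc : c ≠ 0) : (c • (1 : Matrix I I K))⁻¹ = c⁻¹ • 1 :=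
  inv_eq_right_inv <| by rw [smul_mul_smul_comm, one_mul, mul_inv_cancel₀ hc, one_smul]

theorem Matrix.smul_one_add_smul_one_inv_mulVec {s b : K} (hsb : s + b ≠ 0) (z : I → K) :
    (s • (1 : Matrix I I K) + b • 1)⁻¹ *ᵥ ((s • (1 : Matrix I I K)) *ᵥ z) = (s / (s + b)) • z := by
  rw [← add_smul, inv_smul_one hsb, smul_mulVec, smul_mulVec, one_mulVec, one_mulVec, smul_smul,
    div_eq_inv_mul]

end ScalarResolvent

theorem scalar_fixedPoint_iff {I : Type*} [Fintype I] [DecidableEq I] {s b : ℝ} (hsb : 0 < s + b)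
    (z : I → ℝ) :
    (1 / 2) * ((s • (1 : Matrix I I ℝ) + b • 1)⁻¹ *ᵥ ((s • (1 : Matrix I I ℝ)) *ᵥ z) ⬝ᵥ
        (s • (1 : Matrix I I ℝ) + b • 1)⁻¹ *ᵥ ((s • (1 : Matrix I I ℝ)) *ᵥ z)) = b ↔
      b * (s + b) ^ 2 = s ^ 2 * (z ⬝ᵥ z) / 2 := by
  rw [smul_one_add_smul_one_inv_mulVec hsb.ne', smul_dotProduct, dotProduct_smul, smul_eq_mul,
    smul_eq_mul]
  constructor <;> intro h <;> field_simp at h ⊢ <;> linarith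

theorem strictMonoOn_mul_add_sq {s : ℝ} (hs : 0 ≤ s) :
    StrictMonoOn (fun b : ℝ => b * (s + b) ^ 2) (Set.Ici 0) := by
  intro x (hx : 0 ≤ x) y _ hxy
  have hsy : 0 < s + y := by linarith
  calc x * (s + x) ^ 2 ≤ x * (s + y) ^ 2 := by gcongr
    _ < y * (s + y) ^ 2 := by gcongr

theorem existsUnique_mul_add_sq_eq {s N : ℝ} (hs : 0 < s) (hN : 0 < N) :
    ∃! b : ℝ, b ∈ Set.Ioo 0 (N / 2) ∧ b * (s + b) ^ 2 = s ^ 2 * N / 2 := by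
  have hcont : ContinuousOn (fun b : ℝ => b * (s + b) ^ 2) (Set.Icc 0 (N / 2)) := by fun_prop
  have hrange : s ^ 2 * N / 2 ∈ Set.Ioo (0 * (s + 0) ^ 2) (N / 2 * (s + N / 2) ^ 2) := by
    constructor
    · rw [zero_mul]
      positivity
    · nlinarith [mul_pos hs hN, mul_pos hN hN, mul_pos (mul_pos hN hN) hN]
  obtain ⟨b, hb, hb_eq⟩ := intermediate_value_Ioo (by positivity) hcont hrange
  refine ⟨b, ⟨hb, hb_eq⟩, fun c ⟨hc, hc_eq⟩ => ?_⟩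
  exact (strictMonoOn_mul_add_sq hs.le).injOn hc.1.le hb.1.le (hc_eq.trans hb_eq.symm)

section ShrinkObj

variable {I : Type*} [Fintype I] [DecidableEq I]

theorem shrinkObj_smul_one (s : ℝ) (z y : I → ℝ) :
    shrinkObj (s • (1 : Matrix I I ℝ)) z y = (1 / 4) * ((y - z) ⬝ᵥ (y - z)) ^ 2 + s * (y ⬝ᵥ y) := by
  rw [shrinkObj, smul_mulVec, one_mulVec, dotProduct_smul, smul_eq_mul]

theorem shrinkObj_smul_one_add_sub {s a : ℝ} {z : I → ℝ}
    (hstat : 2 * s * a = (1 - a) ^ 3 * (z ⬝ᵥ z)) (d : I → ℝ) :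
    shrinkObj (s • (1 : Matrix I I ℝ)) z (a • z + d) - shrinkObj (s • (1 : Matrix I I ℝ)) z (a • z) =
      (1 / 4) * (d ⬝ᵥ d + 2 * (a - 1) * (d ⬝ᵥ z)) ^ 2 +
        ((1 / 2) * (a - 1) ^ 2 * (z ⬝ᵥ z) + s) * (d ⬝ᵥ d) := by
  have hsub : a • z + d - z = (a - 1) • z + d := by rw [sub_smul, one_smul]; abel
  have hsub' : a • z - z = (a - 1) • z := by rw [sub_smul, one_smul]
  simp only [shrinkObj_smul_one, hsub, hsub', add_dotProduct, dotProduct_add, smul_dotProduct,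
    dotProduct_smul, smul_eq_mul, dotProduct_comm z d]
  linear_combination (d ⬝ᵥ z) * hstat

theorem shrinkObj_smul_one_lt {s a : ℝ} (hs : 0 < s) {z : I → ℝ}
    (hstat : 2 * s * a = (1 - a) ^ 3 * (z ⬝ᵥ z)) {y : I → ℝ} (hy : y ≠ a • z) :
    shrinkObj (s • (1 : Matrix I I ℝ)) z (a • z) < shrinkObj (s • (1 : Matrix I I ℝ)) z y := by
  obtain ⟨d, rfl⟩ : ∃ d, y = a • z + d := ⟨y - a • z, by abel⟩
  have hd : 0 < d ⬝ᵥ d := dotProduct_self_star_pos_iff.mpr fun h => hy (by rw [h, add_zero])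
  have hz : 0 ≤ z ⬝ᵥ z := dotProduct_self_star_nonneg z
  rw [← sub_pos, shrinkObj_smul_one_add_sub hstat d]
  positivity

end ShrinkObj

/-- Remark (scalar case `h = s·id`): the unique solution `b ∈ (0, ‖z‖²/2)` of
`(1/2)‖(h + b·id)⁻¹ h z‖² = b` satisfies the cubic
`(b/s)³ + 2(b/s)² + (b/s) − ‖z‖²/(2s) = 0`, the minimiser of
`y ↦ (1/4)‖y − z‖⁴ + s‖y‖²` is `y = a z` with `a := b/(b+s) ∈ (0,1)`,
and `a` satisfies `−(‖z‖²/s)(1 − a)³ + 2a = 0`. -/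
theorem stmt7 {I : Type*} [Fintype I] [DecidableEq I]
    (z : I → ℝ) (hz : z ≠ 0) (s : ℝ) (hs : 0 < s) :
    (∃! b : ℝ, b ∈ Set.Ioo 0 ((z ⬝ᵥ z) / 2) ∧
      (1 / 2) * (((s • (1 : Matrix I I ℝ)) + b • (1 : Matrix I I ℝ))⁻¹.mulVec
          ((s • (1 : Matrix I I ℝ)).mulVec z) ⬝ᵥ
        ((s • (1 : Matrix I I ℝ)) + b • (1 : Matrix I I ℝ))⁻¹.mulVec
          ((s • (1 : Matrix I I ℝ)).mulVec z)) = b) ∧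
    ∀ b : ℝ, b ∈ Set.Ioo 0 ((z ⬝ᵥ z) / 2) →
      (1 / 2) * (((s • (1 : Matrix I I ℝ)) + b • (1 : Matrix I I ℝ))⁻¹.mulVec
          ((s • (1 : Matrix I I ℝ)).mulVec z) ⬝ᵥ
        ((s • (1 : Matrix I I ℝ)) + b • (1 : Matrix I I ℝ))⁻¹.mulVec
          ((s • (1 : Matrix I I ℝ)).mulVec z)) = b →
      (b / s) ^ 3 + 2 * (b / s) ^ 2 + b / s - (z ⬝ᵥ z) / (2 * s) = 0 ∧
      (b / (b + s)) ∈ Set.Ioo (0 : ℝ) 1 ∧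
      (∀ y : I → ℝ, y ≠ (b / (b + s)) • z →
        shrinkObj (s • (1 : Matrix I I ℝ)) z ((b / (b + s)) • z)
          < shrinkObj (s • (1 : Matrix I I ℝ)) z y) ∧
      -((z ⬝ᵥ z) / s) * (1 - b / (b + s)) ^ 3 + 2 * (b / (b + s)) = 0 := by
  have hN : 0 < z ⬝ᵥ z := dotProduct_self_star_pos_iff.mpr hz
  refine ⟨(existsUnique_congr fun b => and_congr_right fun hb =>
    scalar_fixedPoint_iff (by linarith [hb.1]) z).mpr (existsUnique_mul_add_sq_eq hs hN), ?_⟩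
  intro b hb hfix
  have hb0 : 0 < b := hb.1
  have hcubic := (scalar_fixedPoint_iff (by linarith) z).mp hfix
  have hstat : 2 * s * (b / (b + s)) = (1 - b / (b + s)) ^ 3 * (z ⬝ᵥ z) := by
    field_simp
    linear_combination 2 * s * hcubic
  refine ⟨?_, ⟨by positivity, (div_lt_one (by positivity)).mpr (by linarith)⟩,
    fun y hy => shrinkObj_smul_one_lt hs hstat hy, ?_⟩
  · field_simp
    linear_combination 2 * hcubic
  · generalize b / (b + s) = a at hstat ⊢
    field_simp
    linear_combination hstat
end

section
/- Let h ∈ ℝ^{I×I} be symmetric positive semidefinite and z ∈ ℝ^I with h z ≠ 0. Then the map φ : (0, ∞) → (0, ∞), φ(b) := (1/2)‖(h + b·id)^{-1} h z‖², is continuous, strictly decreasing, tends to 0 as b → ∞, and satisfies φ(‖z‖²/2) < ‖z‖²/2. Consequently the equation φ(b) = b has a unique solution in (0, ‖z‖²/2). -/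
open Matrix

/-!
Diagonalise `h = U diag(s) Uᵀ` with `s ≥ 0` and put `w = Uᵀ z`. Then
`φ b = ½ ∑ᵢ (sᵢ / (sᵢ + b))² wᵢ²` for `b > 0`, and `h z ≠ 0` yields an index with `sᵢ ≠ 0` and
`wᵢ ≠ 0`. Each factor `sᵢ / (sᵢ + b)` is continuous and antitone on `[0, ∞)`, strictly so when
`sᵢ > 0`, tends to `0`, and is `< 1` for `b > 0`; since `‖z‖² = ∑ᵢ wᵢ²`, the last point gives
`φ b < ‖z‖² / 2`. Unlike `φ`, the right-hand side `ψ b` is meaningful and positive at `b = 0`, so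
the intermediate value theorem for `ψ b - b` on `[0, ‖z‖² / 2]` gives the fixed point, unique
because `ψ b - b` is strictly decreasing.
-/

namespace Matrix

variable {n R : Type*} [Fintype n] [DecidableEq n] [CommRing R] [StarRing R]

theorem mulVec_star_mulVec_of_mem_unitary {Q : Matrix n n R} (hQ : Q ∈ unitary (Matrix n n R))
    (x : n → R) : Q *ᵥ (star Q *ᵥ x) = x := by
  rw [mulVec_mulVec, Unitary.mul_star_self_of_mem hQ, one_mulVec]

theorem dotProduct_mulVec_mulVec_of_mem_unitary [TrivialStar R] {Q : Matrix n n R}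
    (hQ : Q ∈ unitary (Matrix n n R)) (x y : n → R) : Q *ᵥ x ⬝ᵥ Q *ᵥ y = x ⬝ᵥ y := by
  rw [dotProduct_mulVec, ← mulVec_transpose, mulVec_mulVec,
    ← conjTranspose_eq_transpose_of_trivial, ← star_eq_conjTranspose,
    Unitary.star_mul_self_of_mem hQ, one_mulVec]

end Matrix

namespace Matrix.IsHermitian

variable {n : Type*} [Fintype n] [DecidableEq n] {A : Matrix n n ℝ} (hA : A.IsHermitian)

theorem star_eigenvectorUnitary_mul :
    star (hA.eigenvectorUnitary : Matrix n n ℝ) * A =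
      diagonal hA.eigenvalues * star (hA.eigenvectorUnitary : Matrix n n ℝ) := by
  have h := hA.conjStarAlgAut_star_eigenvectorUnitary
  simp only [Unitary.conjStarAlgAut_star_apply, RCLike.ofReal_real_eq_id, Function.id_comp] at h
  rw [← h, mul_assoc, mul_assoc, Unitary.mul_star_self_of_mem hA.eigenvectorUnitary.2, mul_one]

theorem star_eigenvectorUnitary_mulVec_mulVec (x : n → ℝ) :
    star (hA.eigenvectorUnitary : Matrix n n ℝ) *ᵥ (A *ᵥ x) =
      fun i => hA.eigenvalues i * (star (hA.eigenvectorUnitary : Matrix n n ℝ) *ᵥ x) i := by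
  rw [mulVec_mulVec, star_eigenvectorUnitary_mul, ← mulVec_mulVec]
  ext i
  simp [mulVec_diagonal]

theorem star_eigenvectorUnitary_mulVec_add_smul_one (b : ℝ) (x : n → ℝ) :
    star (hA.eigenvectorUnitary : Matrix n n ℝ) *ᵥ ((A + b • 1) *ᵥ x) =
      fun i => (hA.eigenvalues i + b) * (star (hA.eigenvectorUnitary : Matrix n n ℝ) *ᵥ x) i := by
  rw [add_mulVec, mulVec_add, star_eigenvectorUnitary_mulVec_mulVec, smul_mulVec, one_mulVec,
    mulVec_smul]
  ext i
  simp [add_mul]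

theorem isUnit_add_smul_one {b : ℝ} (hb : ∀ i, hA.eigenvalues i + b ≠ 0) :
    IsUnit (A + b • 1) := by
  refine mulVec_injective_iff_isUnit.mp fun x y hxy => ?_
  have h := congrArg (star (hA.eigenvectorUnitary : Matrix n n ℝ) *ᵥ ·) hxy
  simp only [star_eigenvectorUnitary_mulVec_add_smul_one, funext_iff] at h
  have hcoord : star (hA.eigenvectorUnitary : Matrix n n ℝ) *ᵥ x =
      star (hA.eigenvectorUnitary : Matrix n n ℝ) *ᵥ y :=
    funext fun i => mul_left_cancel₀ (hb i) (h i)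
  rw [← mulVec_star_mulVec_of_mem_unitary hA.eigenvectorUnitary.2 x, hcoord,
    mulVec_star_mulVec_of_mem_unitary hA.eigenvectorUnitary.2]

theorem star_eigenvectorUnitary_mulVec_inv_add_smul_one {b : ℝ}
    (hb : ∀ i, hA.eigenvalues i + b ≠ 0) (y : n → ℝ) :
    star (hA.eigenvectorUnitary : Matrix n n ℝ) *ᵥ ((A + b • 1)⁻¹ *ᵥ y) =
      fun i => (star (hA.eigenvectorUnitary : Matrix n n ℝ) *ᵥ y) i / (hA.eigenvalues i + b) := by
  have hy : (A + b • 1) *ᵥ ((A + b • 1)⁻¹ *ᵥ y) = y := by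
    rw [mulVec_mulVec, mul_nonsing_inv _ ((isUnit_iff_isUnit_det _).mp (hA.isUnit_add_smul_one hb)),
      one_mulVec]
  ext i
  rw [eq_div_iff (hb i), mul_comm]
  conv_rhs => rw [← hy, star_eigenvectorUnitary_mulVec_add_smul_one]

theorem inv_add_smul_one_mulVec_dotProduct_self {b : ℝ} (hb : ∀ i, hA.eigenvalues i + b ≠ 0)
    (z : n → ℝ) :
    (A + b • 1)⁻¹ *ᵥ (A *ᵥ z) ⬝ᵥ (A + b • 1)⁻¹ *ᵥ (A *ᵥ z) =
      ∑ i, (hA.eigenvalues i / (hA.eigenvalues i + b)) ^ 2 *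
        (star (hA.eigenvectorUnitary : Matrix n n ℝ) *ᵥ z) i ^ 2 := by
  rw [← dotProduct_mulVec_mulVec_of_mem_unitary (Unitary.star_mem hA.eigenvectorUnitary.2),
    star_eigenvectorUnitary_mulVec_inv_add_smul_one hA hb, star_eigenvectorUnitary_mulVec_mulVec]
  refine Finset.sum_congr rfl fun i _ => ?_
  ring

theorem exists_eigenvalues_ne_zero_of_mulVec_ne_zero {z : n → ℝ} (hz : A *ᵥ z ≠ 0) :
    ∃ i, hA.eigenvalues i ≠ 0 ∧ (star (hA.eigenvectorUnitary : Matrix n n ℝ) *ᵥ z) i ≠ 0 := by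
  contrapose! hz
  have h : star (hA.eigenvectorUnitary : Matrix n n ℝ) *ᵥ (A *ᵥ z) = 0 := by
    rw [star_eigenvectorUnitary_mulVec_mulVec]
    ext i
    by_cases hi : hA.eigenvalues i = 0
    · simp [hi]
    · simp [hz i hi]
  rw [← mulVec_star_mulVec_of_mem_unitary hA.eigenvectorUnitary.2 (A *ᵥ z), h, mulVec_zero]

end Matrix.IsHermitian

/-- At `b = 0` the terms with `s i = 0` vanish through `0 / 0 = 0`. -/
noncomputable def spectralEnergy {ι : Type*} [Fintype ι] (s w : ι → ℝ) (b : ℝ) : ℝ :=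
  (1 / 2) * ∑ i, (s i / (s i + b)) ^ 2 * w i ^ 2

section SpectralEnergy

open Set Filter Topology

variable {ι : Type*} [Fintype ι] {s w : ι → ℝ}

theorem continuousOn_div_add {c : ℝ} (hc : 0 ≤ c) :
    ContinuousOn (fun b => c / (c + b)) (Ici 0) := by
  rcases hc.eq_or_lt with rfl | hc
  · simpa using continuousOn_const
  · exact continuousOn_const.div (continuousOn_const.add continuousOn_id)
      fun b hb => (add_pos_of_pos_of_nonneg hc hb).ne'

theorem antitoneOn_div_add {c : ℝ} (hc : 0 ≤ c) : AntitoneOn (fun b => c / (c + b)) (Ici 0) := by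
  intro a ha b hb hab
  rcases hc.eq_or_lt with rfl | hc
  · simp
  · exact div_le_div_of_nonneg_left hc.le (add_pos_of_pos_of_nonneg hc ha) (by linarith)

theorem strictAntiOn_div_add {c : ℝ} (hc : 0 < c) :
    StrictAntiOn (fun b => c / (c + b)) (Ioi (-c)) :=
  fun a ha b hb hab => div_lt_div_of_pos_left hc (by linarith [mem_Ioi.mp ha]) (by linarith)

theorem div_add_lt_one {c b : ℝ} (hc : 0 ≤ c) (hb : 0 < b) : c / (c + b) < 1 :=
  (div_lt_one (by linarith)).mpr (by linarith)

theorem spectralEnergy_pos (hs : ∀ i, 0 ≤ s i) (hsw : ∃ i, s i ≠ 0 ∧ w i ≠ 0) {b : ℝ}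
    (hb : 0 ≤ b) : 0 < spectralEnergy s w b := by
  obtain ⟨i, hsi, hwi⟩ := hsw
  have hterm : 0 < (s i / (s i + b)) ^ 2 * w i ^ 2 := by
    have : s i + b ≠ 0 := (add_pos_of_pos_of_nonneg ((hs i).lt_of_ne' hsi) hb).ne'
    positivity
  unfold spectralEnergy
  have : 0 < ∑ j, (s j / (s j + b)) ^ 2 * w j ^ 2 :=
    Finset.sum_pos' (fun j _ => by positivity) ⟨i, Finset.mem_univ i, hterm⟩
  linarith

theorem continuousOn_spectralEnergy (hs : ∀ i, 0 ≤ s i) :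
    ContinuousOn (spectralEnergy s w) (Ici 0) :=
  continuousOn_const.mul <| continuousOn_finsetSum _ fun i _ =>
    ((continuousOn_div_add (hs i)).pow 2).mul continuousOn_const

theorem strictAntiOn_spectralEnergy (hs : ∀ i, 0 ≤ s i) (hsw : ∃ i, s i ≠ 0 ∧ w i ≠ 0) :
    StrictAntiOn (spectralEnergy s w) (Ici 0) := by
  intro a ha b hb hab
  obtain ⟨i, hsi, hwi⟩ := hsw
  have hsi : 0 < s i := (hs i).lt_of_ne' hsi
  have hb' : 0 ≤ b := hb
  have hle : ∀ j ∈ Finset.univ,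
      (s j / (s j + b)) ^ 2 * w j ^ 2 ≤ (s j / (s j + a)) ^ 2 * w j ^ 2 := fun j _ =>
    mul_le_mul_of_nonneg_right (pow_le_pow_left₀ (div_nonneg (hs j) (by linarith [hs j]))
      (antitoneOn_div_add (hs j) ha hb hab.le) 2) (sq_nonneg _)
  have hlt : (s i / (s i + b)) ^ 2 * w i ^ 2 < (s i / (s i + a)) ^ 2 * w i ^ 2 := by
    refine mul_lt_mul_of_pos_right (pow_lt_pow_left₀ ?_ (div_nonneg hsi.le (by linarith))
      two_ne_zero) (by positivity)
    exact strictAntiOn_div_add hsi ((neg_neg_of_pos hsi).trans_le ha)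
      ((neg_neg_of_pos hsi).trans_le hb) hab
  unfold spectralEnergy
  have := Finset.sum_lt_sum hle ⟨i, Finset.mem_univ i, hlt⟩
  linarith

variable (s w) in
theorem tendsto_spectralEnergy_atTop : Tendsto (spectralEnergy s w) atTop (𝓝 0) := by
  have h : ∀ i, Tendsto (fun b => s i / (s i + b)) atTop (𝓝 0) := fun i =>
    tendsto_const_nhds.div_atTop (tendsto_atTop_add_const_left _ _ tendsto_id)
  have := (tendsto_finsetSum Finset.univ fun i _ => ((h i).pow 2).mul_const (w i ^ 2)).const_mul
    (1 / 2 : ℝ)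
  unfold spectralEnergy
  simpa using this

theorem spectralEnergy_lt (hs : ∀ i, 0 ≤ s i) (hw : w ≠ 0) {b : ℝ} (hb : 0 < b) :
    spectralEnergy s w b < (1 / 2) * ∑ i, w i ^ 2 := by
  obtain ⟨i, hwi⟩ : ∃ i, w i ≠ 0 := Function.ne_iff.mp hw
  have hratio : ∀ j, 0 ≤ s j / (s j + b) ∧ s j / (s j + b) < 1 := fun j =>
    ⟨div_nonneg (hs j) (by linarith [hs j]), div_add_lt_one (hs j) hb⟩
  have hle : ∀ j ∈ Finset.univ, (s j / (s j + b)) ^ 2 * w j ^ 2 ≤ w j ^ 2 := fun j _ =>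
    mul_le_of_le_one_left (sq_nonneg _) (pow_le_one₀ (hratio j).1 (hratio j).2.le)
  have hlt : (s i / (s i + b)) ^ 2 * w i ^ 2 < w i ^ 2 :=
    mul_lt_of_lt_one_left (by positivity) (pow_lt_one₀ (hratio i).1 (hratio i).2 two_ne_zero)
  unfold spectralEnergy
  have := Finset.sum_lt_sum hle ⟨i, Finset.mem_univ i, hlt⟩
  linarith

theorem existsUnique_mem_Ioo_apply_eq_self {f : ℝ → ℝ} {a c : ℝ} (hac : a ≤ c)
    (hf : ContinuousOn f (Icc a c)) (hf' : StrictAntiOn f (Icc a c)) (ha : a < f a)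
    (hc : f c < c) : ∃! x, x ∈ Ioo a c ∧ f x = x := by
  obtain ⟨x, hx, hfx⟩ : ∃ x ∈ Ioo a c, f x - x = 0 :=
    intermediate_value_Ioo' (f := fun x => f x - x) hac (hf.sub continuousOn_id)
      ⟨by linarith, by linarith⟩
  refine ⟨x, ⟨hx, by linarith⟩, fun y ⟨hy, hfy⟩ => ?_⟩
  rcases lt_trichotomy y x with hyx | rfl | hxy
  · linarith [hf' (Ioo_subset_Icc_self hy) (Ioo_subset_Icc_self hx) hyx]
  · rfl
  · linarith [hf' (Ioo_subset_Icc_self hx) (Ioo_subset_Icc_self hy) hxy]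

end SpectralEnergy

/-- Properties of `φ(b) := (1/2)‖(h + b·id)⁻¹ h z‖²` for `h` symmetric nonnegative
definite with `h z ≠ 0`: `φ` is positive and continuous on `(0,∞)`, strictly
decreasing there, tends to `0` at `∞`, satisfies `φ(‖z‖²/2) < ‖z‖²/2`, and the
equation `φ(b) = b` has a unique solution in `(0, ‖z‖²/2)`. -/
theorem stmt13 {I : Type*} [Fintype I] [DecidableEq I]
    (h : Matrix I I ℝ) (hh : h.PosSemidef) (z : I → ℝ) (hz : h.mulVec z ≠ 0) :
    let φ : ℝ → ℝ := fun b =>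
      (1 / 2) * ((h + b • (1 : Matrix I I ℝ))⁻¹.mulVec (h.mulVec z) ⬝ᵥ
        (h + b • (1 : Matrix I I ℝ))⁻¹.mulVec (h.mulVec z))
    (∀ b ∈ Set.Ioi (0 : ℝ), 0 < φ b) ∧
    ContinuousOn φ (Set.Ioi 0) ∧
    StrictAntiOn φ (Set.Ioi 0) ∧
    Filter.Tendsto φ Filter.atTop (nhds 0) ∧
    φ ((z ⬝ᵥ z) / 2) < (z ⬝ᵥ z) / 2 ∧
    (∃! b : ℝ, b ∈ Set.Ioo 0 ((z ⬝ᵥ z) / 2) ∧ φ b = b) := by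
  intro φ
  set U := (hh.1.eigenvectorUnitary : Matrix I I ℝ)
  set s := hh.1.eigenvalues
  set w := star U *ᵥ z
  have hs : ∀ i, 0 ≤ s i := hh.eigenvalues_nonneg
  have hφ : ∀ b ∈ Set.Ioi (0 : ℝ), φ b = spectralEnergy s w b := fun b hb => by
    simp only [φ, spectralEnergy, Matrix.IsHermitian.inv_add_smul_one_mulVec_dotProduct_self hh.1
      fun i => (add_pos_of_nonneg_of_pos (hs i) hb).ne']
    rfl
  have hsw : ∃ i, s i ≠ 0 ∧ w i ≠ 0 := hh.1.exists_eigenvalues_ne_zero_of_mulVec_ne_zero hz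
  have hw : w ≠ 0 := fun hw0 => by
    obtain ⟨i, -, hi⟩ := hsw
    exact hi (by simp [hw0])
  have hzw : z ⬝ᵥ z / 2 = (1 / 2) * ∑ i, w i ^ 2 := by
    rw [← dotProduct_mulVec_mulVec_of_mem_unitary (Unitary.star_mem hh.1.eigenvectorUnitary.2) z z]
    simp only [dotProduct, sq]
    ring
  have hB : 0 < z ⬝ᵥ z / 2 :=
    (spectralEnergy_pos hs hsw zero_le_one).trans (hzw ▸ spectralEnergy_lt hs hw one_pos)
  have hψB : spectralEnergy s w (z ⬝ᵥ z / 2) < z ⬝ᵥ z / 2 :=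
    (spectralEnergy_lt hs hw hB).trans_eq hzw.symm
  refine ⟨fun b hb => hφ b hb ▸ spectralEnergy_pos hs hsw (le_of_lt hb), ?_, ?_, ?_,
    hφ _ hB ▸ hψB, ?_⟩
  · exact ((continuousOn_spectralEnergy hs).mono Set.Ioi_subset_Ici_self).congr hφ
  · intro a ha b hb hab
    rw [hφ a ha, hφ b hb]
    exact strictAntiOn_spectralEnergy hs hsw (Set.Ioi_subset_Ici_self ha)
      (Set.Ioi_subset_Ici_self hb) hab
  · refine (tendsto_spectralEnergy_atTop s w).congr' ?_
    filter_upwards [Filter.eventually_gt_atTop 0] with b hb using (hφ b hb).symm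
  · refine (existsUnique_congr fun b => and_congr_right fun hb => by rw [hφ b hb.1]).mpr ?_
    exact existsUnique_mem_Ioo_apply_eq_self hB.le
      ((continuousOn_spectralEnergy hs).mono Set.Icc_subset_Ici_self)
      ((strictAntiOn_spectralEnergy hs hsw).mono Set.Icc_subset_Ici_self)
      (spectralEnergy_pos hs hsw le_rfl) hψB
end
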